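/- arXiv:2504.05574 — 3 statements merged into one kernel-verified Lean document; each statement's English description precedes it below -/
import Mathlib

section
/- Let (X_k)_{k≥1} be i.i.d. nonnegative random variables, z = E[e^{iX_1}], S_n = X_1 + ⋯ + X_n, Z_n = ∑_{k=1}^n e^{iS_k}, Z_0 = 0. Define M_0 = z and M_n = Z_n − z·Z_{n−1} for n ≥ 1. Then (M_n)_{n≥0} is a complex-valued martingale with respect to the filtration F_n = σ(X_1,…,X_n) (F_0 trivial), and for every N ≥ 1 one has the convolution identity Z_N = ∑_{k=1}^N z^{N−k} M_k. -/
/-!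
Because `S (n + 1) = S n + X (n + 1)` and `S 0 = 0`, the increments of `M` are
`M (n + 1) - M n = e^{i S n} (e^{i X (n + 1)} - z)` for every `n ≥ 0`. The first factor is bounded
and `ℱ n`-measurable, the second is independent of `ℱ n` with mean zero, so pulling out the first
factor makes the conditional expectation of each increment vanish. The convolution identity just
inverts the recursion `Z n = M n + z Z (n - 1)`.
-/

open MeasureTheory ProbabilityTheory Filter Complex Topology

theorem iSup_Icc_one_eq_iSup_Iio_succ {α : Type*} [CompleteLattice α] (f : ℕ → α) (n : ℕ) :
    ⨆ k ∈ Set.Icc 1 n, f k = ⨆ i ∈ Set.Iio n, f (i + 1) := by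
  have : Set.Icc 1 n = (· + 1) '' Set.Iio n := by
    ext k
    simp only [Set.mem_Icc, Set.mem_image, Set.mem_Iio]
    exact ⟨fun h => ⟨k - 1, by omega, by omega⟩, by rintro ⟨i, hi, rfl⟩; omega⟩
  rw [this, iSup_image]

theorem eq_sum_pow_mul_of_eq_sub_mul {R : Type*} [CommRing R] {a m : ℕ → R} {z : R}
    (ha : a 0 = 0) (hm : ∀ n, 1 ≤ n → m n = a n - z * a (n - 1)) (N : ℕ) :
    a N = ∑ k ∈ Finset.Icc 1 N, z ^ (N - k) * m k := by
  induction N with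
  | zero => simp [ha]
  | succ N ih =>
    rw [Finset.sum_Icc_succ_top (by omega), hm (N + 1) (by omega), Nat.sub_self, pow_zero,
      one_mul, Nat.add_sub_cancel, ih, Finset.mul_sum]
    have : ∀ k ∈ Finset.Icc 1 N, z ^ (N + 1 - k) * m k = z * (z ^ (N - k) * m k) := by
      intro k hk
      rw [Nat.sub_add_comm (Finset.mem_Icc.mp hk).2, pow_succ]
      ring
    rw [Finset.sum_congr rfl this]
    ring

theorem sub_eq_cexp_mul_of_eq_sub_mul {x s : ℕ → ℝ} {a m : ℕ → ℂ} {z : ℂ}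
    (hs : ∀ n, s n = ∑ k ∈ Finset.Icc 1 n, x k)
    (ha : ∀ n, a n = ∑ k ∈ Finset.Icc 1 n, cexp (I * s k))
    (hm0 : m 0 = z) (hm : ∀ n, 1 ≤ n → m n = a n - z * a (n - 1)) (n : ℕ) :
    m (n + 1) - m n = cexp (I * s n) * (cexp (I * x (n + 1)) - z) := by
  have hs_succ : ∀ n, s (n + 1) = s n + x (n + 1) := fun n => by
    simp [hs, Finset.sum_Icc_succ_top]
  rcases n with _ | n
  · simp [hm, hm0, ha, hs]
  · simp only [hm, ha, Finset.sum_Icc_succ_top, le_add_iff_nonneg_left, zero_le, hs_succ,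
      ofReal_add, mul_add, exp_add, add_tsub_cancel_right]
    ring

namespace ProbabilityTheory

variable {Ω : Type*} {mΩ : MeasurableSpace Ω} {μ : Measure Ω}

theorem iIndepFun.indep_comap_iSup_Iio {β : Type*} [MeasurableSpace β] {Y : ℕ → Ω → β}
    (hY : ∀ i, Measurable (Y i)) (h : iIndepFun Y μ) (n : ℕ) :
    Indep (MeasurableSpace.comap (Y n) inferInstance)
      (⨆ i ∈ Set.Iio n, MeasurableSpace.comap (Y i) inferInstance) μ := by
  simpa using indep_iSup_of_disjoint (fun i => (hY i).comap_le) h.iIndep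
    (S := {n}) (T := Set.Iio n) (by simp)

variable {𝕜 : Type*} [RCLike 𝕜] [IsFiniteMeasure μ]

theorem condExp_mul_eq_zero_of_indep {m m' : MeasurableSpace Ω} (hm : m ≤ mΩ) (hm' : m' ≤ mΩ)
    (hindep : Indep m' m μ) {f g : Ω → 𝕜} {c : ℝ} (hf : StronglyMeasurable[m] f)
    (hf_bound : ∀ ω, ‖f ω‖ ≤ c) (hg : StronglyMeasurable[m'] g) (hg_int : Integrable g μ)
    (hg_mean : μ[g] = 0) :
    μ[f * g | m] =ᵐ[μ] 0 := by
  filter_upwards [condExp_stronglyMeasurable_bilin_of_bound (ContinuousLinearMap.mul ℝ 𝕜) hm hf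
    hg_int c (ae_of_all _ hf_bound), condExp_indep_eq hm' hm hg hindep] with ω hpull hconst
  change μ[fun ω => f ω * g ω | m] ω = 0
  simpa [hconst, hg_mean] using hpull

theorem martingale_of_sub_eq_mul_indep {ℱ : Filtration ℕ mΩ} {M U V : ℕ → Ω → 𝕜} {c : ℝ}
    {m : ℕ → MeasurableSpace Ω} (hM0 : StronglyMeasurable[ℱ 0] (M 0))
    (hM0_int : Integrable (M 0) μ) (hinc : ∀ n, M (n + 1) - M n = U n * V n)
    (hU : ∀ n, StronglyMeasurable[ℱ n] (U n)) (hU_bound : ∀ n ω, ‖U n ω‖ ≤ c)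
    (hm : ∀ n, m n ≤ ℱ (n + 1)) (hV : ∀ n, StronglyMeasurable[m n] (V n))
    (hV_int : ∀ n, Integrable (V n) μ) (hV_mean : ∀ n, μ[V n] = 0)
    (hindep : ∀ n, Indep (m n) (ℱ n) μ) :
    Martingale M ℱ μ := by
  have hM : ∀ n, M (n + 1) = M n + U n * V n := fun n => eq_add_of_sub_eq' (hinc n)
  have hadapted : StronglyAdapted ℱ M := by
    intro n
    induction n with
    | zero => exact hM0
    | succ n ih =>
      rw [hM]
      exact (ih.mono (ℱ.mono n.le_succ)).add
        (((hU n).mono (ℱ.mono n.le_succ)).mul ((hV n).mono (hm n)))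
  have hint : ∀ n, Integrable (M n) μ := by
    intro n
    induction n with
    | zero => exact hM0_int
    | succ n ih =>
      rw [hM]
      exact ih.add ((hV_int n).bdd_mul ((hU n).mono (ℱ.le n)).aestronglyMeasurable
        (ae_of_all _ (hU_bound n)))
  refine martingale_of_condExp_sub_eq_zero_nat hadapted hint fun n => ?_
  rw [hinc n]
  exact condExp_mul_eq_zero_of_indep (ℱ.le n) ((hm n).trans (ℱ.le _)) (hindep n) (hU n)
    (hU_bound n) (hV n) (hV_int n) (hV_mean n)

end ProbabilityTheory

theorem stmt4_general
    {Ω : Type*} [MeasureSpace Ω] [IsProbabilityMeasure (ℙ : Measure Ω)]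
    (X : ℕ → Ω → ℝ)
    (hmeas : ∀ k, Measurable (X k))
    (hindep : iIndepFun (fun k => X (k + 1)) ℙ)
    (hident : ∀ k, IdentDistrib (X (k + 1)) (X 1) ℙ ℙ)
    (S : ℕ → Ω → ℝ)
    (hS : ∀ n ω, S n ω = ∑ k ∈ Finset.Icc 1 n, X k ω)
    (z : ℂ) (hzdef : z = ∫ ω, Complex.exp (Complex.I * (X 1 ω : ℂ)) ∂ℙ)
    (Z : ℕ → Ω → ℂ)
    (hZ : ∀ n ω, Z n ω = ∑ k ∈ Finset.Icc 1 n, Complex.exp (Complex.I * (S k ω : ℂ)))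
    (M : ℕ → Ω → ℂ)
    (hM0 : ∀ ω, M 0 ω = z)
    (hM : ∀ n : ℕ, 1 ≤ n → ∀ ω, M n ω = Z n ω - z * Z (n - 1) ω)
    (ℱ : Filtration ℕ (MeasureSpace.toMeasurableSpace (α := Ω)))
    (hℱ : ∀ n, ℱ n = ⨆ k ∈ Set.Icc 1 n, MeasurableSpace.comap (X k) inferInstance) :
    Martingale M ℱ ℙ ∧
    ∀ N : ℕ, 1 ≤ N → ∀ ω, Z N ω = ∑ k ∈ Finset.Icc 1 N, z ^ (N - k) * M k ω := by
  have hZ0 : ∀ ω, Z 0 ω = 0 := by simp [hZ]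
  refine ⟨?_, fun N _ ω => eq_sum_pow_mul_of_eq_sub_mul (hZ0 ω) (fun n hn => hM n hn ω) N⟩
  have hmeas_exp : Measurable fun x : ℝ => cexp (I * x) := by fun_prop
  have hXF : ∀ n, ∀ k ∈ Finset.Icc 1 n, Measurable[ℱ n] (X k) := fun n k hk =>
    Measurable.of_comap_le <| (hℱ n).symm ▸
      le_biSup (fun k => MeasurableSpace.comap (X k) inferInstance) (by simpa using hk)
  have hSF : ∀ n, Measurable[ℱ n] (S n) := fun n => by
    rw [funext (hS n)]
    exact Finset.measurable_sum _ (hXF n)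
  have hexp_int : ∀ n, Integrable (fun ω => cexp (I * X n ω)) ℙ := fun n =>
    (integrable_const 1).mono' (hmeas_exp.comp (hmeas n)).aestronglyMeasurable
      (ae_of_all _ fun ω => by simp [norm_exp])
  have hmean : ∀ n, ∫ ω, cexp (I * X (n + 1) ω) - z = 0 := fun n => by
    rw [integral_sub (hexp_int (n + 1)) (integrable_const z), integral_const, hzdef]
    simpa [Function.comp_def, sub_eq_zero] using ((hident n).comp hmeas_exp).integral_eq
  have hindep_ℱ : ∀ n, Indep (MeasurableSpace.comap (X (n + 1)) inferInstance) (ℱ n) := fun n => by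
    rw [hℱ, iSup_Icc_one_eq_iSup_Iio_succ]
    exact hindep.indep_comap_iSup_Iio (fun i => hmeas (i + 1)) n
  exact martingale_of_sub_eq_mul_indep (c := 1)
    (by rw [funext hM0]; exact stronglyMeasurable_const) (by simp [funext hM0])
    (fun n => funext fun ω =>
      sub_eq_cexp_mul_of_eq_sub_mul (hS · ω) (hZ · ω) (hM0 ω) (fun n hn => hM n hn ω) n)
    (fun n => (hmeas_exp.comp (hSF n)).stronglyMeasurable) (fun n ω => by simp [norm_exp])
    (fun n => (hXF (n + 1) (n + 1) (by simp)).comap_le)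
    (fun n => ((hmeas_exp.comp (comap_measurable _)).sub_const z).stronglyMeasurable)
    (fun n => (hexp_int (n + 1)).sub (integrable_const z)) hmean hindep_ℱ

/-- With `z = E e^{iX_1}`, `Z_n = ∑_{k=1}^n e^{iS_k}`, `M_0 = z`,
`M_n = Z_n - z Z_{n-1}` for `n ≥ 1`, the process `M` is a martingale for the natural
filtration `F_n = σ(X_1,…,X_n)` (`F_0` trivial), and `Z_N = ∑_{k=1}^N z^{N-k} M_k`. -/
theorem stmt4
    {Ω : Type*} [MeasureSpace Ω] [IsProbabilityMeasure (ℙ : Measure Ω)]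
    (X : ℕ → Ω → ℝ)
    (hmeas : ∀ k, Measurable (X k))
    (hindep : iIndepFun (fun k => X (k + 1)) ℙ)
    (hident : ∀ k, IdentDistrib (X (k + 1)) (X 1) ℙ ℙ)
    (hnonneg : ∀ k ω, 0 ≤ X k ω)
    (S : ℕ → Ω → ℝ)
    (hS : ∀ n ω, S n ω = ∑ k ∈ Finset.Icc 1 n, X k ω)
    (z : ℂ) (hzdef : z = ∫ ω, Complex.exp (Complex.I * (X 1 ω : ℂ)) ∂ℙ)
    (Z : ℕ → Ω → ℂ)
    (hZ : ∀ n ω, Z n ω = ∑ k ∈ Finset.Icc 1 n, Complex.exp (Complex.I * (S k ω : ℂ)))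
    (M : ℕ → Ω → ℂ)
    (hM0 : ∀ ω, M 0 ω = z)
    (hM : ∀ n : ℕ, 1 ≤ n → ∀ ω, M n ω = Z n ω - z * Z (n - 1) ω)
    (ℱ : Filtration ℕ (MeasureSpace.toMeasurableSpace (α := Ω)))
    (hℱ : ∀ n, ℱ n = ⨆ k ∈ Set.Icc 1 n, MeasurableSpace.comap (X k) inferInstance) :
    Martingale M ℱ ℙ ∧
    ∀ N : ℕ, 1 ≤ N → ∀ ω, Z N ω = ∑ k ∈ Finset.Icc 1 N, z ^ (N - k) * M k ω :=
  stmt4_general X hmeas hindep hident S hS z hzdef Z hZ M hM0 hM ℱ hℱ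
end

section
/- Let (X_k)_{k≥1} be i.i.d. nonnegative random variables with E[X_1^{-α} 1{X_1 ≤ 1}] < ∞ for some α ∈ (0,1/2), and S_n = X_1 + ⋯ + X_n. Then for every p > 0: (i) E[S_n^{-p}] < ∞ for every n > p/α, and (ii) limsup_{n→∞} n^p · E[S_n^{-p}] ≤ (E[X_1])^{-p}, where the right-hand side is interpreted as 0 when E[X_1] = ∞. In particular there exist C and n₀ with E[S_n^{-p}] ≤ C·n^{-p} for all n ≥ n₀. -/
/-!
Because every `X_k` is at most `S_n`, `S_n^{-q} ≤ ∏_{k ≤ n} X_k^{-q/n}`, so by independence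
`E[S_n^{-q}] ≤ (E[X_1^{-q/n}])^n`, which is finite as soon as `q/n ≤ α`.
For `c < E[X_1]`, a Chernoff bound (with `X_1` truncated, so that its Laplace transform can be
expanded to second order) makes `P(S_n ≤ cn)` exponentially small in `n`. Splitting `E[S_n^{-p}]`
along this event, the complement contributes at most `(cn)^{-p}`, and by Cauchy–Schwarz the event
contributes at most `E[S_n^{-2p}]^{1/2} P(S_n ≤ cn)^{1/2}`, where `E[S_n^{-2p}]` is bounded for
large `n` by the first step. Hence `limsup n^p E[S_n^{-p}] ≤ c^{-p}`; let `c ↑ E[X_1]`.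
-/

open MeasureTheory ProbabilityTheory Filter Topology ENNReal

theorem ENNReal.rpow_le_rpow_of_nonpos {x y : ℝ≥0∞} {z : ℝ} (hxy : x ≤ y) (hz : z ≤ 0) :
    y ^ z ≤ x ^ z := by
  simpa [← ENNReal.rpow_neg] using
    ENNReal.inv_le_inv.2 (ENNReal.rpow_le_rpow hxy (neg_nonneg.2 hz))

theorem ENNReal.rpow_neg_le_prod_rpow_neg {ι : Type*} {s : Finset ι} (hs : s.Nonempty)
    {a : ℝ≥0∞} {b : ι → ℝ≥0∞} (hb : ∀ i ∈ s, b i ≤ a) {q : ℝ} (hq : 0 ≤ q) :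
    a ^ (-q) ≤ ∏ i ∈ s, b i ^ (-(q / s.card)) := by
  have hcard : (s.card : ℝ) ≠ 0 := by exact_mod_cast hs.card_pos.ne'
  calc a ^ (-q) = ∏ _i ∈ s, a ^ (-(q / s.card)) := by
        rw [Finset.prod_const, ← ENNReal.rpow_mul_natCast]
        field_simp
    _ ≤ ∏ i ∈ s, b i ^ (-(q / s.card)) :=
        Finset.prod_le_prod' fun i hi =>
          ENNReal.rpow_le_rpow_of_nonpos (hb i hi) (neg_nonpos.2 (by positivity))

theorem ENNReal.le_rpow_of_forall_lt {L m : ℝ≥0∞} (hm : m ≠ 0) {p : ℝ}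
    (h : ∀ c < m, L ≤ c ^ p) : L ≤ m ^ p := by
  have : (𝓝[<] m).NeBot := nhdsLT_neBot_of_exists_lt ⟨0, pos_iff_ne_zero.2 hm⟩
  have htend : Tendsto (fun c : ℝ≥0∞ => c ^ p) (𝓝[<] m) (𝓝 (m ^ p)) :=
    (ENNReal.continuous_rpow_const.tendsto m).mono_left nhdsWithin_le_nhds
  exact ge_of_tendsto htend (eventually_nhdsWithin_of_forall h)

theorem Real.exp_neg_le_one_sub_add_sq {u : ℝ} (hu : 0 ≤ u) :
    Real.exp (-u) ≤ 1 - u + u ^ 2 := by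
  have hmul : Real.exp (-u) * Real.exp u = 1 := by
    rw [← Real.exp_add, neg_add_cancel, Real.exp_zero]
  -- `(1 - u + u ^ 2) * (1 + u + u ^ 2 / 2) = 1 + u ^ 2 / 2 + u ^ 3 / 2 + u ^ 4 / 2 ≥ 1`
  nlinarith [Real.quadratic_le_exp_of_nonneg hu, Real.exp_pos (-u),
    mul_nonneg (mul_nonneg hu hu) hu, sq_nonneg u]

theorem exists_le_mul_rpow_neg_of_limsup_lt_top {u : ℕ → ℝ≥0∞} {p : ℝ}
    (h : limsup (fun n : ℕ => (n : ℝ≥0∞) ^ p * u n) atTop < ⊤) :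
    ∃ C : ℝ, ∃ n₀ : ℕ, ∀ n, n₀ ≤ n → u n ≤ ENNReal.ofReal C * (n : ℝ≥0∞) ^ (-p) := by
  obtain ⟨B, hlt, hB⟩ := exists_between h
  obtain ⟨n₀, hn₀⟩ := eventually_atTop.1 (eventually_lt_of_limsup_lt hlt)
  refine ⟨B.toReal, max n₀ 1, fun n hn => ?_⟩
  have hn0 : (n : ℝ≥0∞) ≠ 0 := by simp; omega
  calc u n = (n : ℝ≥0∞) ^ (-p) * ((n : ℝ≥0∞) ^ p * u n) := by
        rw [← mul_assoc, ← ENNReal.rpow_add _ _ hn0 (ENNReal.natCast_ne_top n), neg_add_cancel,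
          ENNReal.rpow_zero, one_mul]
    _ ≤ (n : ℝ≥0∞) ^ (-p) * B := by gcongr; exact (hn₀ n (le_of_max_le_left hn)).le
    _ = ENNReal.ofReal B.toReal * (n : ℝ≥0∞) ^ (-p) := by
        rw [ENNReal.ofReal_toReal hB.ne, mul_comm]

section

variable {Ω : Type*} {mΩ : MeasurableSpace Ω} {μ : Measure Ω}

theorem lintegral_prod_comp_eq_pow {ι : Type*} {Y : ι → Ω → ℝ} {j : ι}
    (hmeas : ∀ i, Measurable (Y i)) (hindep : iIndepFun Y μ)
    (hident : ∀ i, IdentDistrib (Y i) (Y j) μ μ) {g : ℝ → ℝ≥0∞} (hg : Measurable g)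
    (s : Finset ι) :
    ∫⁻ ω, ∏ i ∈ s, g (Y i ω) ∂μ = (∫⁻ ω, g (Y j ω) ∂μ) ^ s.card := by
  rw [lintegral_prod_eq_prod_lintegral_of_indepFun s (fun i ω => g (Y i ω))
    (hindep.comp (fun _ => g) fun _ => hg) fun i => hg.comp (hmeas i)]
  exact Finset.prod_eq_pow_card fun i _ => ((hident i).comp hg).lintegral_eq

theorem lintegral_rpow_neg_sum_le_pow {Y : ℕ → Ω → ℝ} (hmeas : ∀ k, Measurable (Y k))
    (hindep : iIndepFun Y μ) (hident : ∀ k, IdentDistrib (Y k) (Y 0) μ μ)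
    (hnonneg : ∀ k ω, 0 ≤ Y k ω) {q : ℝ} (hq : 0 ≤ q) {n : ℕ} (hn : n ≠ 0) :
    ∫⁻ ω, ENNReal.ofReal (∑ k ∈ Finset.range n, Y k ω) ^ (-q) ∂μ
      ≤ (∫⁻ ω, ENNReal.ofReal (Y 0 ω) ^ (-(q / n)) ∂μ) ^ n := by
  have hrange : (Finset.range n).Nonempty := Finset.nonempty_range_iff.2 hn
  calc ∫⁻ ω, ENNReal.ofReal (∑ k ∈ Finset.range n, Y k ω) ^ (-q) ∂μ
      ≤ ∫⁻ ω, ∏ k ∈ Finset.range n, ENNReal.ofReal (Y k ω) ^ (-(q / n)) ∂μ := by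
        refine lintegral_mono fun ω => ?_
        simpa using ENNReal.rpow_neg_le_prod_rpow_neg hrange (fun k hk =>
          ENNReal.ofReal_le_ofReal (Finset.single_le_sum (fun i _ => hnonneg i ω) hk)) hq
    _ = (∫⁻ ω, ENNReal.ofReal (Y 0 ω) ^ (-(q / n)) ∂μ) ^ n := by
        simpa using lintegral_prod_comp_eq_pow hmeas hindep hident
          (g := fun x => ENNReal.ofReal x ^ (-(q / n))) (by fun_prop) (Finset.range n)

theorem lintegral_rpow_neg_lt_top_of_le [IsFiniteMeasure μ] {Z : Ω → ℝ} (hZ : Measurable Z)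
    {α β : ℝ} (hβ : 0 ≤ β) (hβα : β ≤ α)
    (hneg : ∫⁻ ω in {ω | Z ω ≤ 1}, ENNReal.ofReal (Z ω) ^ (-α) ∂μ < ⊤) :
    ∫⁻ ω, ENNReal.ofReal (Z ω) ^ (-β) ∂μ < ⊤ := by
  have hs : MeasurableSet {ω | Z ω ≤ 1} := measurableSet_le hZ measurable_const
  rw [← lintegral_add_compl _ hs]
  refine ENNReal.add_lt_top.2 ⟨?_, ?_⟩
  · refine (setLIntegral_mono (by fun_prop) fun ω hω => ?_).trans_lt hneg
    exact ENNReal.rpow_le_rpow_of_exponent_ge (ENNReal.ofReal_le_one.2 hω) (by linarith)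
  · calc ∫⁻ ω in {ω | Z ω ≤ 1}ᶜ, ENNReal.ofReal (Z ω) ^ (-β) ∂μ
        ≤ ∫⁻ _ in {ω | Z ω ≤ 1}ᶜ, 1 ∂μ := by
          refine setLIntegral_mono measurable_const fun ω hω => ?_
          have h1 : 1 ≤ ENNReal.ofReal (Z ω) := by
            simpa using ENNReal.ofReal_le_ofReal (le_of_lt (not_le.1 hω))
          simpa using ENNReal.rpow_le_rpow_of_nonpos h1 (neg_nonpos.2 hβ)
      _ < ⊤ := by simp [measure_lt_top]

theorem lintegral_ofReal_pos_of_lintegral_rpow_neg_lt_top [NeZero μ] {Z : Ω → ℝ}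
    (hZ : Measurable Z) {α : ℝ} (hα : 0 < α)
    (hneg : ∫⁻ ω, ENNReal.ofReal (Z ω) ^ (-α) ∂μ < ⊤) :
    0 < ∫⁻ ω, ENNReal.ofReal (Z ω) ∂μ := by
  refine pos_iff_ne_zero.2 fun h0 => NeZero.ne μ ?_
  have hfin := ae_lt_top (by fun_prop) hneg.ne
  have hzero := (lintegral_eq_zero_iff (by fun_prop)).1 h0
  refine ae_eq_bot.1 (eventually_false_iff_eq_bot.1 ?_)
  filter_upwards [hfin, hzero] with ω hfin hzero
  simp_all [ENNReal.zero_rpow_of_neg (neg_neg_of_pos hα)]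

theorem setLIntegral_le_sqrt_lintegral_sq_mul_sqrt_measure {f : Ω → ℝ≥0∞}
    (hf : AEMeasurable f μ) (A : Set Ω) :
    ∫⁻ ω in A, f ω ∂μ ≤ (∫⁻ ω, f ω ^ (2 : ℝ) ∂μ) ^ (2⁻¹ : ℝ) * μ A ^ (2⁻¹ : ℝ) := by
  have hCS := ENNReal.lintegral_mul_le_Lp_mul_Lq (μ.restrict A) Real.HolderConjugate.two_two
    hf.restrict (aemeasurable_const (b := (1 : ℝ≥0∞)))
  simp only [Pi.mul_apply, mul_one, one_mul, ENNReal.one_rpow, lintegral_const,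
    Measure.restrict_apply, MeasurableSet.univ, Set.univ_inter, one_div] at hCS
  refine hCS.trans ?_
  gcongr
  exact Measure.restrict_le_self

theorem lintegral_rpow_neg_le_add_of_lower_tail [IsProbabilityMeasure μ] {T : Ω → ℝ}
    (hT : Measurable T) {p : ℝ} (hp : 0 ≤ p) (a : ℝ) :
    ∫⁻ ω, ENNReal.ofReal (T ω) ^ (-p) ∂μ ≤ ENNReal.ofReal a ^ (-p)
      + (∫⁻ ω, ENNReal.ofReal (T ω) ^ (-(2 * p)) ∂μ) ^ (2⁻¹ : ℝ) * μ {ω | T ω ≤ a} ^ (2⁻¹ : ℝ) := by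
  set A := {ω | T ω ≤ a}
  have hA : MeasurableSet A := measurableSet_le hT measurable_const
  have hsq : ∀ ω, (ENNReal.ofReal (T ω) ^ (-p)) ^ (2 : ℝ) = ENNReal.ofReal (T ω) ^ (-(2 * p)) :=
    fun ω => by rw [← ENNReal.rpow_mul]; ring_nf
  rw [← lintegral_add_compl _ hA, add_comm]
  gcongr
  · calc ∫⁻ ω in Aᶜ, ENNReal.ofReal (T ω) ^ (-p) ∂μ ≤ ∫⁻ _ in Aᶜ, ENNReal.ofReal a ^ (-p) ∂μ :=
          setLIntegral_mono measurable_const fun ω hω => ENNReal.rpow_le_rpow_of_nonpos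
            (ENNReal.ofReal_le_ofReal (le_of_lt (not_le.1 hω))) (neg_nonpos.2 hp)
      _ ≤ ENNReal.ofReal a ^ (-p) := by
          rw [setLIntegral_const]
          exact mul_le_of_le_one_right' prob_le_one
  · simpa only [hsq] using setLIntegral_le_sqrt_lintegral_sq_mul_sqrt_measure
      (f := fun ω => ENNReal.ofReal (T ω) ^ (-p)) (by fun_prop) A

theorem exists_lt_integral_min_of_lt_lintegral [IsFiniteMeasure μ] {Z : Ω → ℝ}
    (hZ : Measurable Z) (hZ0 : ∀ ω, 0 ≤ Z ω) {c : ℝ}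
    (hc : ENNReal.ofReal c < ∫⁻ ω, ENNReal.ofReal (Z ω) ∂μ) :
    ∃ R : ℕ, c < ∫ ω, min (Z ω) R ∂μ := by
  have hsup : ∫⁻ ω, ENNReal.ofReal (Z ω) ∂μ
      = ⨆ R : ℕ, ∫⁻ ω, ENNReal.ofReal (min (Z ω) R) ∂μ := by
    rw [← lintegral_iSup (f := fun (R : ℕ) ω => ENNReal.ofReal (min (Z ω) R)) (by fun_prop)
      fun R R' h ω => ENNReal.ofReal_le_ofReal (min_le_min_left _ (by exact_mod_cast h))]
    congr 1 with ω
    simp_rw [ENNReal.ofReal_min, ENNReal.ofReal_natCast, ← inf_iSup_eq, ENNReal.iSup_natCast,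
      inf_top_eq]
  rw [hsup, lt_iSup_iff] at hc
  obtain ⟨R, hR⟩ := hc
  refine ⟨R, ?_⟩
  have hint : Integrable (fun ω => min (Z ω) R) μ :=
    Integrable.of_bound (by fun_prop) R (ae_of_all _ fun ω => by
      rw [Real.norm_of_nonneg (le_min (hZ0 ω) R.cast_nonneg)]; exact min_le_right _ _)
  rw [← ofReal_integral_eq_lintegral_ofReal hint
    (ae_of_all _ fun ω => le_min (hZ0 ω) R.cast_nonneg)] at hR
  exact ((ENNReal.ofReal_lt_ofReal_iff'.1 hR).1)

theorem mgf_neg_le_of_nonneg [IsProbabilityMeasure μ] {Z : Ω → ℝ} (hZ : Measurable Z)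
    (hZ0 : ∀ ω, 0 ≤ Z ω) {t R : ℝ} (ht : 0 ≤ t) (hR : 0 ≤ R) :
    mgf Z μ (-t) ≤ 1 + t ^ 2 * R ^ 2 - t * ∫ ω, min (Z ω) R ∂μ := by
  have hmin : Integrable (fun ω => min (Z ω) R) μ :=
    Integrable.of_bound (by fun_prop) R (ae_of_all _ fun ω => by
      rw [Real.norm_of_nonneg (le_min (hZ0 ω) hR)]; exact min_le_right _ _)
  have hexp : Integrable (fun ω => Real.exp (-t * Z ω)) μ :=
    Integrable.of_bound (by fun_prop) 1 (ae_of_all _ fun ω => by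
      rw [Real.norm_of_nonneg (Real.exp_pos _).le, Real.exp_le_one_iff]
      nlinarith [hZ0 ω])
  have hpt : ∀ ω, Real.exp (-t * Z ω) ≤ 1 + t ^ 2 * R ^ 2 - t * min (Z ω) R := by
    intro ω
    have hm0 : 0 ≤ min (Z ω) R := le_min (hZ0 ω) hR
    have hmR : min (Z ω) R ≤ R := min_le_right _ _
    calc Real.exp (-t * Z ω) ≤ Real.exp (-(t * min (Z ω) R)) :=
          Real.exp_le_exp.2 (by nlinarith [min_le_left (Z ω) R])
      _ ≤ 1 - t * min (Z ω) R + (t * min (Z ω) R) ^ 2 :=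
          Real.exp_neg_le_one_sub_add_sq (by positivity)
      _ ≤ 1 + t ^ 2 * R ^ 2 - t * min (Z ω) R := by
          nlinarith [mul_le_mul hmR hmR hm0 hR, sq_nonneg t]
  calc mgf Z μ (-t) ≤ ∫ ω, (1 + t ^ 2 * R ^ 2 - t * min (Z ω) R) ∂μ :=
        integral_mono hexp ((integrable_const _).sub (hmin.const_mul t)) hpt
    _ = 1 + t ^ 2 * R ^ 2 - t * ∫ ω, min (Z ω) R ∂μ := by
        rw [integral_sub (integrable_const _) (hmin.const_mul t), integral_const,
          integral_const_mul]
        simp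

theorem exists_exp_mul_mgf_neg_le_exp_neg [IsProbabilityMeasure μ] {Z : Ω → ℝ}
    (hZ : Measurable Z) (hZ0 : ∀ ω, 0 ≤ Z ω) {c : ℝ}
    (hc : ENNReal.ofReal c < ∫⁻ ω, ENNReal.ofReal (Z ω) ∂μ) :
    ∃ t, 0 < t ∧ ∃ δ, 0 < δ ∧ Real.exp (t * c) * mgf Z μ (-t) ≤ Real.exp (-δ) := by
  obtain ⟨R, hR⟩ := exists_lt_integral_min_of_lt_lintegral hZ hZ0 hc
  set m := ∫ ω, min (Z ω) R ∂μ
  set D : ℝ := (R : ℝ) ^ 2 + 1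
  have hD : 0 < D := by positivity
  -- chosen so that the quadratic error `t ^ 2 * R ^ 2 ≤ t ^ 2 * D` is half the gain `t * (m - c)`
  set t := (m - c) / (2 * D)
  have ht : 0 < t := div_pos (by linarith) (by positivity)
  have htD : t * D = (m - c) / 2 := by simp only [t]; field_simp
  refine ⟨t, ht, t * (m - c) / 2, by nlinarith, ?_⟩
  calc Real.exp (t * c) * mgf Z μ (-t)
      ≤ Real.exp (t * c) * Real.exp (t ^ 2 * R ^ 2 - t * m) := by
        gcongr
        refine (mgf_neg_le_of_nonneg hZ hZ0 ht.le R.cast_nonneg).trans ?_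
        linarith [Real.add_one_le_exp (t ^ 2 * R ^ 2 - t * m)]
    _ ≤ Real.exp (-(t * (m - c) / 2)) := by
        rw [← Real.exp_add]
        gcongr
        nlinarith [mul_le_mul_of_nonneg_left (show (R : ℝ) ^ 2 ≤ D by simp [D]) (sq_nonneg t)]

theorem measure_sum_le_mul_le_exp {Y : ℕ → Ω → ℝ} (hmeas : ∀ k, Measurable (Y k))
    (hindep : iIndepFun Y μ) (hident : ∀ k, IdentDistrib (Y k) (Y 0) μ μ)
    (hnonneg : ∀ k ω, 0 ≤ Y k ω) {c : ℝ}
    (hc : ENNReal.ofReal c < ∫⁻ ω, ENNReal.ofReal (Y 0 ω) ∂μ) :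
    ∃ δ, 0 < δ ∧ ∀ n : ℕ,
      μ {ω | ∑ k ∈ Finset.range n, Y k ω ≤ c * n} ≤ ENNReal.ofReal (Real.exp (-δ * n)) := by
  have : IsProbabilityMeasure μ := hindep.isProbabilityMeasure
  obtain ⟨t, ht, δ, hδ, hkey⟩ := exists_exp_mul_mgf_neg_le_exp_neg (hmeas 0) (hnonneg 0) hc
  refine ⟨δ, hδ, fun n => ?_⟩
  have hint : Integrable (fun ω => Real.exp (-t * (∑ k ∈ Finset.range n, Y k) ω)) μ :=
    Integrable.of_bound (by fun_prop) 1 (ae_of_all _ fun ω => by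
      rw [Real.norm_of_nonneg (Real.exp_pos _).le, Real.exp_le_one_iff, Finset.sum_apply]
      nlinarith [Finset.sum_nonneg fun k (_ : k ∈ Finset.range n) => hnonneg k ω])
  have hmgf : mgf (∑ k ∈ Finset.range n, Y k) μ (-t) = mgf (Y 0) μ (-t) ^ n := by
    rw [hindep.mgf_sum hmeas, Finset.prod_eq_pow_card fun k _ =>
      mgf_congr_of_identDistrib _ _ (hident k) _, Finset.card_range]
  have hchernoff : μ.real {ω | ∑ k ∈ Finset.range n, Y k ω ≤ c * n}
      ≤ Real.exp (-δ * n) := calc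
    _ ≤ Real.exp (-(-t) * (c * n)) * mgf (∑ k ∈ Finset.range n, Y k) μ (-t) := by
        simpa [Finset.sum_apply] using
          measure_le_le_exp_mul_mgf (c * n) (neg_nonpos.2 ht.le) hint
    _ = (Real.exp (t * c) * mgf (Y 0) μ (-t)) ^ n := by
        rw [hmgf, mul_pow, ← Real.exp_nat_mul]
        ring_nf
    _ ≤ Real.exp (-δ) ^ n := pow_le_pow_left₀ (mul_nonneg (Real.exp_pos _).le mgf_nonneg) hkey n
    _ = Real.exp (-δ * n) := by
        rw [← Real.exp_nat_mul]
        ring_nf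
  rw [← ofReal_measureReal]
  exact ENNReal.ofReal_le_ofReal hchernoff

theorem limsup_rpow_mul_lintegral_rpow_neg_sum_le {Y : ℕ → Ω → ℝ}
    (hmeas : ∀ k, Measurable (Y k)) (hindep : iIndepFun Y μ)
    (hident : ∀ k, IdentDistrib (Y k) (Y 0) μ μ) (hnonneg : ∀ k ω, 0 ≤ Y k ω)
    {p : ℝ} (hp : 0 ≤ p) {m : ℕ}
    (hm : ∫⁻ ω, ENNReal.ofReal (∑ k ∈ Finset.range m, Y k ω) ^ (-(2 * p)) ∂μ < ⊤)
    {c : ℝ≥0∞} (hc : c < ∫⁻ ω, ENNReal.ofReal (Y 0 ω) ∂μ) :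
    limsup (fun n : ℕ => (n : ℝ≥0∞) ^ p
      * ∫⁻ ω, ENNReal.ofReal (∑ k ∈ Finset.range n, Y k ω) ^ (-p) ∂μ) atTop ≤ c ^ (-p) := by
  have : IsProbabilityMeasure μ := hindep.isProbabilityMeasure
  have hctop : c ≠ ⊤ := (hc.trans_le le_top).ne
  obtain ⟨δ, hδ, hlower⟩ := measure_sum_le_mul_le_exp hmeas hindep hident hnonneg
    (c := c.toReal) (by rwa [ENNReal.ofReal_toReal hctop])
  set K := ∫⁻ ω, ENNReal.ofReal (∑ k ∈ Finset.range m, Y k ω) ^ (-(2 * p)) ∂μ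
  have hK : ∀ n, m ≤ n →
      ∫⁻ ω, ENNReal.ofReal (∑ k ∈ Finset.range n, Y k ω) ^ (-(2 * p)) ∂μ ≤ K :=
    fun n hn => lintegral_mono fun ω => ENNReal.rpow_le_rpow_of_nonpos
      (ENNReal.ofReal_le_ofReal (Finset.sum_le_sum_of_subset_of_nonneg
        (Finset.range_subset_range.2 hn) fun k _ _ => hnonneg k ω)) (by linarith)
  have hbound : ∀ᶠ n : ℕ in atTop,
      (n : ℝ≥0∞) ^ p * ∫⁻ ω, ENNReal.ofReal (∑ k ∈ Finset.range n, Y k ω) ^ (-p) ∂μ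
        ≤ c ^ (-p) + K ^ (2⁻¹ : ℝ) * ENNReal.ofReal ((n : ℝ) ^ p * Real.exp (-(δ / 2) * n)) := by
    filter_upwards [eventually_ge_atTop m, eventually_ge_atTop 1] with n hnm hn1
    have hn0 : (n : ℝ≥0∞) ≠ 0 := by simp; omega
    calc (n : ℝ≥0∞) ^ p * ∫⁻ ω, ENNReal.ofReal (∑ k ∈ Finset.range n, Y k ω) ^ (-p) ∂μ
        ≤ (n : ℝ≥0∞) ^ p * (ENNReal.ofReal (c.toReal * n) ^ (-p)
          + K ^ (2⁻¹ : ℝ) * ENNReal.ofReal (Real.exp (-δ * n)) ^ (2⁻¹ : ℝ)) := by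
          gcongr
          refine (lintegral_rpow_neg_le_add_of_lower_tail
            (T := fun ω => ∑ k ∈ Finset.range n, Y k ω) (by fun_prop) hp (c.toReal * n)).trans ?_
          gcongr
          exacts [hK n hnm, hlower n]
      _ = c ^ (-p) + K ^ (2⁻¹ : ℝ) * ENNReal.ofReal ((n : ℝ) ^ p * Real.exp (-(δ / 2) * n)) := by
          rw [mul_add]
          congr 1
          · rw [ENNReal.ofReal_mul ENNReal.toReal_nonneg, ENNReal.ofReal_toReal hctop,
              ENNReal.ofReal_natCast, ENNReal.mul_rpow_of_ne_top hctop (ENNReal.natCast_ne_top n),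
              mul_left_comm, ← ENNReal.rpow_add _ _ hn0 (ENNReal.natCast_ne_top n),
              add_neg_cancel, ENNReal.rpow_zero, mul_one]
          · rw [ENNReal.ofReal_rpow_of_nonneg (Real.exp_pos _).le (by norm_num), ← Real.exp_mul,
              ENNReal.ofReal_mul (by positivity), ← ENNReal.ofReal_rpow_of_nonneg n.cast_nonneg hp,
              ENNReal.ofReal_natCast, mul_left_comm]
            ring_nf
  have hKtop : K ^ (2⁻¹ : ℝ) ≠ ⊤ := ENNReal.rpow_ne_top_of_nonneg (by norm_num) hm.ne
  have htail : Tendsto (fun n : ℕ => c ^ (-p)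
      + K ^ (2⁻¹ : ℝ) * ENNReal.ofReal ((n : ℝ) ^ p * Real.exp (-(δ / 2) * n))) atTop
      (𝓝 (c ^ (-p))) := by
    have hdecay := (tendsto_rpow_mul_exp_neg_mul_atTop_nhds_zero p (δ / 2) (by positivity)).comp
      tendsto_natCast_atTop_atTop
    simpa using tendsto_const_nhds.add
      (ENNReal.Tendsto.const_mul (ENNReal.tendsto_ofReal hdecay) (Or.inr hKtop))
  exact (limsup_le_limsup hbound).trans_eq htail.limsup_eq

end

theorem stmt6_general
    {Ω : Type*} [MeasureSpace Ω] [IsProbabilityMeasure (ℙ : Measure Ω)]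
    (X : ℕ → Ω → ℝ)
    (hmeas : ∀ k, Measurable (X k))
    (hindep : iIndepFun (fun k => X (k + 1)) ℙ)
    (hident : ∀ k, IdentDistrib (X (k + 1)) (X 1) ℙ ℙ)
    (hnonneg : ∀ k ω, 0 ≤ X k ω)
    (S : ℕ → Ω → ℝ)
    (hS : ∀ n ω, S n ω = ∑ k ∈ Finset.Icc 1 n, X k ω)
    (α : ℝ) (hα : 0 < α)
    (hneg : ∫⁻ ω in {ω | X 1 ω ≤ 1}, (ENNReal.ofReal (X 1 ω)) ^ (-α) ∂ℙ < ⊤)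
    (p : ℝ) (hp : 0 < p) :
    (∀ n : ℕ, p / α < n → ∫⁻ ω, (ENNReal.ofReal (S n ω)) ^ (-p) ∂ℙ < ⊤) ∧
    (Filter.limsup
        (fun n : ℕ => (n : ℝ≥0∞) ^ p * ∫⁻ ω, (ENNReal.ofReal (S n ω)) ^ (-p) ∂ℙ)
        atTop ≤ (∫⁻ ω, ENNReal.ofReal (X 1 ω) ∂ℙ) ^ (-p)) ∧
    (∃ C : ℝ, ∃ n₀ : ℕ, ∀ n : ℕ, n₀ ≤ n →
      ∫⁻ ω, (ENNReal.ofReal (S n ω)) ^ (-p) ∂ℙ ≤ ENNReal.ofReal C * (n : ℝ≥0∞) ^ (-p)) := by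
  have hSrange : ∀ n ω, S n ω = ∑ k ∈ Finset.range n, X (k + 1) ω := fun n ω => by
    rw [hS, Finset.range_eq_Ico, Finset.sum_Ico_add' (fun k => X k ω),
      ← Finset.Ico_add_one_right_eq_Icc]
  simp only [hSrange]
  have hmom : ∀ β, 0 ≤ β → β ≤ α → ∫⁻ ω, ENNReal.ofReal (X 1 ω) ^ (-β) ∂ℙ < ⊤ :=
    fun β hβ hβα => lintegral_rpow_neg_lt_top_of_le (hmeas 1) hβ hβα hneg
  have hfin : ∀ q, 0 ≤ q → ∀ n : ℕ, q / α < n →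
      ∫⁻ ω, ENNReal.ofReal (∑ k ∈ Finset.range n, X (k + 1) ω) ^ (-q) ∂ℙ < ⊤ := by
    intro q hq n hn
    have hn0 : (0 : ℝ) < n := (div_nonneg hq hα.le).trans_lt hn
    refine (lintegral_rpow_neg_sum_le_pow (fun k => hmeas (k + 1)) hindep hident
      (fun k => hnonneg (k + 1)) hq (by exact_mod_cast hn0.ne')).trans_lt
      (ENNReal.pow_lt_top (hmom _ (by positivity) ?_))
    rw [div_lt_iff₀ hα] at hn
    rw [div_le_iff₀ hn0]
    linarith
  have hmean : 0 < ∫⁻ ω, ENNReal.ofReal (X 1 ω) ∂ℙ :=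
    lintegral_ofReal_pos_of_lintegral_rpow_neg_lt_top (hmeas 1) hα (hmom α hα.le le_rfl)
  have hlimsup := ENNReal.le_rpow_of_forall_lt hmean.ne' fun c hc =>
    limsup_rpow_mul_lintegral_rpow_neg_sum_le (fun k => hmeas (k + 1)) hindep hident
      (fun k => hnonneg (k + 1)) hp.le (hfin (2 * p) (by positivity) (⌈2 * p / α⌉₊ + 1)
        (by push_cast; linarith [Nat.le_ceil (2 * p / α)])) hc
  refine ⟨fun n hn => hfin p hp.le n hn, hlimsup,
    exists_le_mul_rpow_neg_of_limsup_lt_top (hlimsup.trans_lt ?_)⟩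
  rw [ENNReal.rpow_neg, ENNReal.inv_lt_top]
  exact ENNReal.rpow_pos_of_nonneg hmean hp.le

/-- If `E[X_1^{-α}; X_1 ≤ 1] < ∞` for some `α ∈ (0,1/2)`, then for every
`p > 0`: (i) `E[S_n^{-p}] < ∞` for `n > p/α`; (ii) `limsup_n n^p E[S_n^{-p}] ≤ (E X_1)^{-p}`
(interpreted as `0` when `E X_1 = ∞`); in particular `E[S_n^{-p}] ≤ C n^{-p}` eventually.
Here expectations of nonnegative extended quantities are lower integrals, with
`0^{-p} = ∞` and `∞^{-p} = 0` in `ℝ≥0∞`. -/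
theorem stmt6
    {Ω : Type*} [MeasureSpace Ω] [IsProbabilityMeasure (ℙ : Measure Ω)]
    (X : ℕ → Ω → ℝ)
    (hmeas : ∀ k, Measurable (X k))
    (hindep : iIndepFun (fun k => X (k + 1)) ℙ)
    (hident : ∀ k, IdentDistrib (X (k + 1)) (X 1) ℙ ℙ)
    (hnonneg : ∀ k ω, 0 ≤ X k ω)
    (S : ℕ → Ω → ℝ)
    (hS : ∀ n ω, S n ω = ∑ k ∈ Finset.Icc 1 n, X k ω)
    (α : ℝ) (hα : 0 < α) (hα' : α < 1 / 2)
    (hneg : ∫⁻ ω in {ω | X 1 ω ≤ 1}, (ENNReal.ofReal (X 1 ω)) ^ (-α) ∂ℙ < ⊤)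
    (p : ℝ) (hp : 0 < p) :
    (∀ n : ℕ, p / α < n → ∫⁻ ω, (ENNReal.ofReal (S n ω)) ^ (-p) ∂ℙ < ⊤) ∧
    (Filter.limsup
        (fun n : ℕ => (n : ℝ≥0∞) ^ p * ∫⁻ ω, (ENNReal.ofReal (S n ω)) ^ (-p) ∂ℙ)
        atTop ≤ (∫⁻ ω, ENNReal.ofReal (X 1 ω) ∂ℙ) ^ (-p)) ∧
    (∃ C : ℝ, ∃ n₀ : ℕ, ∀ n : ℕ, n₀ ≤ n →
      ∫⁻ ω, (ENNReal.ofReal (S n ω)) ^ (-p) ∂ℙ ≤ ENNReal.ofReal C * (n : ℝ≥0∞) ^ (-p)) :=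
  stmt6_general X hmeas hindep hident hnonneg S hS α hα hneg p hp
end

section
/- Let (X_k)_{k≥1} be i.i.d. nonnegative random variables and S_n = X_1 + ⋯ + X_n. Then for every p > 0 and n ≥ 1, with values in [0,∞]: E[S_n^{-p} · 1{max_{1≤k≤n} X_k ≤ 1}] ≤ n^{-p} · (E[X_1^{-p/n} · 1{X_1 ≤ 1}])^n. -/
/-!
By AM–GM, `S_n ≥ n (X_1 ⋯ X_n)^{1/n}`, so on the event `{max_k X_k ≤ 1}` the integrand
`S_n^{-p}` is bounded by `n^{-p} ∏_k X_k^{-p/n} 1{X_k ≤ 1}`. The expectation of this product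
factorises by independence into `n` factors, all equal to `E[X_1^{-p/n}; X_1 ≤ 1]`.
-/

open MeasureTheory ProbabilityTheory Filter Complex Topology ENNReal

open Finset

theorem Finset.prod_Icc_one_eq_prod_range {M : Type*} [CommMonoid M] (f : ℕ → M) (n : ℕ) :
    ∏ k ∈ Icc 1 n, f k = ∏ i ∈ range n, f (i + 1) := by
  rw [range_eq_Ico, prod_Ico_add' f, zero_add, Ico_add_one_right_eq_Icc]

theorem ENNReal.ofReal_sum_rpow_neg_le {ι : Type*} (s : Finset ι) {x : ι → ℝ}
    (hx : ∀ i ∈ s, 0 ≤ x i) {p : ℝ} (hp : 0 ≤ p) :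
    ENNReal.ofReal (∑ i ∈ s, x i) ^ (-p)
      ≤ (#s : ℝ≥0∞) ^ (-p) * ∏ i ∈ s, ENNReal.ofReal (x i) ^ (-(p / #s)) := by
  rcases s.eq_empty_or_nonempty with rfl | hs
  · simp
  have hn : (0 : ℝ) < #s := by exact_mod_cast hs.card_pos
  set G := (∏ i ∈ s, x i) ^ (#s : ℝ)⁻¹ with hG_def
  have am_gm : #s * G ≤ ∑ i ∈ s, x i := by
    have := Real.geom_mean_le_arith_mean s (fun _ => 1) x (fun _ _ => zero_le_one)
      (by simpa using hs.card_pos) hx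
    simp only [Real.rpow_one, sum_const, nsmul_eq_mul, mul_one, one_mul] at this
    rw [le_div_iff₀ hn] at this
    linarith
  have hG : ENNReal.ofReal G ^ (-p) = ∏ i ∈ s, ENNReal.ofReal (x i) ^ (-(p / #s)) := by
    rw [hG_def, ← ENNReal.ofReal_rpow_of_nonneg (prod_nonneg hx) (inv_nonneg.2 hn.le),
      ← ENNReal.rpow_mul, ENNReal.ofReal_prod_of_nonneg hx,
      ENNReal.prod_rpow_of_ne_top fun _ _ => ENNReal.ofReal_ne_top]
    ring_nf
  calc ENNReal.ofReal (∑ i ∈ s, x i) ^ (-p)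
      ≤ ENNReal.ofReal (#s * G) ^ (-p) := by
        rw [ENNReal.rpow_neg, ENNReal.rpow_neg]
        gcongr
    _ = (#s : ℝ≥0∞) ^ (-p) * ∏ i ∈ s, ENNReal.ofReal (x i) ^ (-(p / #s)) := by
        rw [ENNReal.ofReal_mul (Nat.cast_nonneg _), ENNReal.ofReal_natCast,
          ENNReal.mul_rpow_of_ne_top (natCast_ne_top _) ofReal_ne_top, hG]

theorem lintegral_prod_Icc_comp_eq_pow {Ω β : Type*} [MeasurableSpace Ω] [MeasurableSpace β]
    {μ : Measure Ω} {X : ℕ → Ω → β} (hmeas : ∀ k, Measurable (X k))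
    (hindep : iIndepFun (fun k => X (k + 1)) μ)
    (hident : ∀ k, IdentDistrib (X (k + 1)) (X 1) μ μ)
    {g : β → ℝ≥0∞} (hg : Measurable g) (n : ℕ) :
    ∫⁻ ω, ∏ k ∈ Icc 1 n, g (X k ω) ∂μ = (∫⁻ ω, g (X 1 ω) ∂μ) ^ n := by
  simp_rw [prod_Icc_one_eq_prod_range fun k => g (X k _)]
  have hprod := lintegral_prod_eq_prod_lintegral_of_indepFun (range n) _
    (hindep.comp _ fun _ => hg) fun k => hg.comp (hmeas (k + 1))
  have hlaw (k : ℕ) : ∫⁻ ω, g (X (k + 1) ω) ∂μ = ∫⁻ ω, g (X 1 ω) ∂μ :=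
    ((hident k).comp hg).lintegral_eq
  simp only [Function.comp_apply] at hprod
  rw [hprod, prod_congr rfl fun k _ => hlaw k, prod_const, card_range]

theorem stmt7_general
    {Ω : Type*} [MeasureSpace Ω] [IsProbabilityMeasure (ℙ : Measure Ω)]
    (X : ℕ → Ω → ℝ)
    (hmeas : ∀ k, Measurable (X k))
    (hindep : iIndepFun (fun k => X (k + 1)) ℙ)
    (hident : ∀ k, IdentDistrib (X (k + 1)) (X 1) ℙ ℙ)
    (hnonneg : ∀ k ω, 0 ≤ X k ω)
    (S : ℕ → Ω → ℝ)
    (hS : ∀ n ω, S n ω = ∑ k ∈ Finset.Icc 1 n, X k ω)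
    (p : ℝ) (hp : 0 < p) (n : ℕ) :
    ∫⁻ ω in {ω | ∀ k ∈ Finset.Icc 1 n, X k ω ≤ 1},
        (ENNReal.ofReal (S n ω)) ^ (-p) ∂ℙ
      ≤ (n : ℝ≥0∞) ^ (-p) *
        (∫⁻ ω in {ω | X 1 ω ≤ 1}, (ENNReal.ofReal (X 1 ω)) ^ (-(p / n)) ∂ℙ) ^ n := by
  set g : ℝ → ℝ≥0∞ := (Set.Iic 1).indicator fun x => ENNReal.ofReal x ^ (-(p / n))
  have hg : Measurable g := by unfold g; fun_prop (disch := measurability)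
  have hA : MeasurableSet {ω | ∀ k ∈ Icc 1 n, X k ω ≤ 1} := by measurability
  have hpointwise (ω : Ω) :
      {ω | ∀ k ∈ Icc 1 n, X k ω ≤ 1}.indicator (fun ω => ENNReal.ofReal (S n ω) ^ (-p)) ω
        ≤ (n : ℝ≥0∞) ^ (-p) * ∏ k ∈ Icc 1 n, g (X k ω) := by
    refine Set.indicator_apply_le' (fun hω => ?_) fun _ => zero_le
    have hg_eq (k : ℕ) (hk : k ∈ Icc 1 n) : g (X k ω) = ENNReal.ofReal (X k ω) ^ (-(p / n)) :=
      Set.indicator_of_mem (Set.mem_Iic.2 (hω k hk)) _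
    rw [prod_congr rfl hg_eq, hS]
    simpa using ENNReal.ofReal_sum_rpow_neg_le (Icc 1 n) (fun k _ => hnonneg k ω) hp.le
  calc _ = ∫⁻ ω, {ω | ∀ k ∈ Icc 1 n, X k ω ≤ 1}.indicator
          (fun ω => ENNReal.ofReal (S n ω) ^ (-p)) ω ∂ℙ := (lintegral_indicator hA _).symm
    _ ≤ ∫⁻ ω, (n : ℝ≥0∞) ^ (-p) * ∏ k ∈ Icc 1 n, g (X k ω) ∂ℙ := lintegral_mono hpointwise
    _ = (n : ℝ≥0∞) ^ (-p) * (∫⁻ ω, g (X 1 ω) ∂ℙ) ^ n := by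
        rw [lintegral_const_mul _ (by fun_prop),
          lintegral_prod_Icc_comp_eq_pow hmeas hindep hident hg]
    _ = _ := by
        rw [← lintegral_indicator (measurableSet_le (hmeas 1) measurable_const)]
        rfl

/-- For i.i.d. nonnegative `(X_k)` and `S_n = X_1 + ⋯ + X_n`, for every
`p > 0` and `n ≥ 1` (values in `[0,∞]`, with `0^{-q} = ∞` in `ℝ≥0∞`):
`E[S_n^{-p}; max_{1≤k≤n} X_k ≤ 1] ≤ n^{-p} (E[X_1^{-p/n}; X_1 ≤ 1])^n`. -/
theorem stmt7
    {Ω : Type*} [MeasureSpace Ω] [IsProbabilityMeasure (ℙ : Measure Ω)]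
    (X : ℕ → Ω → ℝ)
    (hmeas : ∀ k, Measurable (X k))
    (hindep : iIndepFun (fun k => X (k + 1)) ℙ)
    (hident : ∀ k, IdentDistrib (X (k + 1)) (X 1) ℙ ℙ)
    (hnonneg : ∀ k ω, 0 ≤ X k ω)
    (S : ℕ → Ω → ℝ)
    (hS : ∀ n ω, S n ω = ∑ k ∈ Finset.Icc 1 n, X k ω)
    (p : ℝ) (hp : 0 < p) (n : ℕ) (hn : 1 ≤ n) :
    ∫⁻ ω in {ω | ∀ k ∈ Finset.Icc 1 n, X k ω ≤ 1},
        (ENNReal.ofReal (S n ω)) ^ (-p) ∂ℙ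
      ≤ (n : ℝ≥0∞) ^ (-p) *
        (∫⁻ ω in {ω | X 1 ω ≤ 1}, (ENNReal.ofReal (X 1 ω)) ^ (-(p / n)) ∂ℙ) ^ n :=
  stmt7_general X hmeas hindep hident hnonneg S hS p hp n
end
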